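/- Let 𝒢 be a GRN with associated PRN ℛ, and let ρ, ρ′ be super-simple nodes of 𝒢 such that on some ιo-simple path of 𝒢 the node ρ appears strictly before ρ′. Then on every ι^R o^P-simple path of ℛ the four nodes (ρ,R), (ρ,P), (ρ′,R), (ρ′,P) all appear, and they appear in the order (ρ,R), then (ρ,P), then (ρ′,R), then (ρ′,P). -/

import Mathlib

/-! A PRN path from `ι^R` to `o^P` must alternate `v^R → v^P → w^R → ⋯`, so every
`ι^R o^P`-simple path is the lift of an `ιo`-simple path of the GRN. It remains to see that two
super-simple nodes occur in the same order on every `ιo`-simple path: if `ρ'` came before `ρ` on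
one path, then the first path up to `ρ` followed by the second one after `ρ` would be an
`ιo`-walk avoiding `ρ'`, and shortening it to a simple path contradicts super-simplicity. -/

open List Relation

/- In the PRN on `V × Bool`, the node `(v, false)` is the mRNA node `v^R`
   and `(v, true)` is the protein node `v^P`. -/

/-- Arrow relation of the PRN associated to a GRN with arrow relation `E`:
arrows `(v,R) → (v,P)` for every `v`, and `(u,P) → (v,R)` whenever `E u v`. -/
def prnAdj {V : Type*} (E : V → V → Prop) : V × Bool → V × Bool → Prop :=
  fun a b =>
    (a.1 = b.1 ∧ a.2 = false ∧ b.2 = true) ∨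
    (E a.1 b.1 ∧ a.2 = true ∧ b.2 = false)

/-- The lift of a path `σ₁ → ⋯ → σ_m` in the GRN to the path
`(σ₁,R) → (σ₁,P) → ⋯ → (σ_m,R) → (σ_m,P)` in the PRN. -/
def liftPath {V : Type*} (l : List V) : List (V × Bool) :=
  l.flatMap fun v => [(v, false), (v, true)]

/-- A simple path: a nonempty directed path visiting each node at most once. -/
def IsSimplePath {V : Type*} (E : V → V → Prop) (l : List V) : Prop :=
  l ≠ [] ∧ l.Chain' E ∧ l.Nodup

/-- A simple path from `a` to `b`. -/
def IsSimplePathFrom {V : Type*} (E : V → V → Prop) (a b : V) (l : List V) : Prop :=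
  IsSimplePath E l ∧ l.head? = some a ∧ l.getLast? = some b

/-- A node is simple if it lies on some simple path from the input to the output. -/
def IsSimpleNode {V : Type*} (E : V → V → Prop) (ι o v : V) : Prop :=
  ∃ l, IsSimplePathFrom E ι o l ∧ v ∈ l

/-- A node is super-simple if it lies on every simple path from the input to the output. -/
def IsSuperSimpleNode {V : Type*} (E : V → V → Prop) (ι o v : V) : Prop :=
  ∀ l, IsSimplePathFrom E ι o l → v ∈ l

/-- A node is appendage if it lies on no simple path from the input to the output. -/
def IsAppendageNode {V : Type*} (E : V → V → Prop) (ι o v : V) : Prop :=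
  ¬ IsSimpleNode E ι o v

/-- An appendage path from `a` to `b`: a simple path from `a` to `b` each of whose
nodes, except possibly `a` and `b`, is an appendage node. -/
def IsAppendagePath {V : Type*} (E : V → V → Prop) (ι o a b : V) (l : List V) : Prop :=
  IsSimplePathFrom E a b l ∧ ∀ v ∈ l, v ≠ a → v ≠ b → IsAppendageNode E ι o v

/-- A directed cycle: a nonempty closed directed walk visiting each of its nodes
exactly once (a self-loop is a cycle of length one). -/
def IsCycle {V : Type*} (E : V → V → Prop) (c : List V) : Prop :=
  c ≠ [] ∧ c.Chain' E ∧ c.Nodup ∧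
    ∃ a b, c.head? = some a ∧ c.getLast? = some b ∧ E b a

/-- Arrow relation of the appendage subnetwork: the induced subgraph on appendage nodes. -/
def appendageAdj {V : Type*} (E : V → V → Prop) (ι o : V) : V → V → Prop :=
  fun a b => E a b ∧ IsAppendageNode E ι o a ∧ IsAppendageNode E ι o b

/-- Two appendage nodes are path-equivalent if each is reachable from the other by a
directed path lying entirely within the appendage subnetwork. -/
def PathEquiv {V : Type*} (E : V → V → Prop) (ι o a b : V) : Prop :=
  Relation.ReflTransGen (appendageAdj E ι o) a b ∧
  Relation.ReflTransGen (appendageAdj E ι o) b a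

/-- A node `x` is between `a` and `b` if some input-to-output simple path visits
`a`, `x`, `b` in that order. -/
def Between {V : Type*} (E : V → V → Prop) (ι o a x b : V) : Prop :=
  ∃ l, IsSimplePathFrom E ι o l ∧ [a, x, b].Sublist l

namespace List

variable {α : Type*} {R : α → α → Prop}

theorem pair_sublist_iff {a b : α} {l : List α} :
    [a, b] <+ l ↔ ∃ p s, l = p ++ a :: s ∧ b ∈ s := by
  constructor
  · intro h
    obtain ⟨r₁, r₂, rfl, ha, hb⟩ := cons_sublist_iff.mp h
    obtain ⟨p, s, rfl⟩ := append_of_mem ha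
    exact ⟨p, s ++ r₂, by simp, by simp [singleton_sublist.mp hb]⟩
  · rintro ⟨p, s, rfl, hb⟩
    exact ((singleton_sublist.mpr hb).cons_cons a).trans (sublist_append_right p _)

theorem IsChain.splice {p q u r : List α} {x : α} (h₁ : IsChain R (p ++ x :: q))
    (h₂ : IsChain R (u ++ x :: r)) : IsChain R (p ++ x :: r) := by
  obtain ⟨hp, -, hpx⟩ := isChain_append.mp h₁
  exact hp.append (isChain_append.mp h₂).2.1 hpx

end List

section Paths

variable {V : Type*} {E : V → V → Prop}

theorem exists_isSimplePathFrom_subset {a b : V} (l : List V) (hl : l.IsChain E)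
    (ha : l.head? = some a) (hb : l.getLast? = some b) :
    ∃ m, IsSimplePathFrom E a b m ∧ m ⊆ l := by
  induction hn : l.length using Nat.strong_induction_on generalizing l with
  | _ n ih =>
  by_cases hnd : l.Nodup
  · exact ⟨l, ⟨⟨by rintro rfl; simp at ha, hl, hnd⟩, ha, hb⟩, Subset.refl l⟩
  obtain ⟨x, hx⟩ := exists_duplicate_iff_not_nodup.mpr hnd
  obtain ⟨p, s, rfl, hxs⟩ := pair_sublist_iff.mp (duplicate_iff_sublist.mp hx)
  obtain ⟨q, r, rfl⟩ := append_of_mem hxs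
  have hloop : p ++ x :: (q ++ x :: r) = (p ++ x :: q) ++ x :: r := by simp
  rw [hloop, getLast?_append_cons] at hb
  obtain ⟨m, hm, hsub⟩ := ih _ (by simp [← hn]) (p ++ x :: r) (hl.splice (hloop ▸ hl))
    (by cases p <;> simpa using ha) (by rwa [getLast?_append_cons]) rfl
  exact ⟨m, hm, fun y hy => by grind⟩

theorem pair_sublist_of_isSuperSimpleNode {ι o ρ ρ' : V} (hρ : IsSuperSimpleNode E ι o ρ)
    (hρ' : IsSuperSimpleNode E ι o ρ') (horder : ∃ l, IsSimplePathFrom E ι o l ∧ [ρ, ρ'] <+ l)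
    {l : List V} (hl : IsSimplePathFrom E ι o l) : [ρ, ρ'] <+ l := by
  obtain ⟨l₀, ⟨⟨-, hc₀, hnd₀⟩, hh₀, -⟩, hsub₀⟩ := horder
  obtain ⟨p, s, rfl, hρ's⟩ := pair_sublist_iff.mp hsub₀
  have hρ'p : ρ' ∉ p := fun h => (nodup_append.mp hnd₀).2.2 ρ' h ρ' (by simp [hρ's]) rfl
  have hρρ' : ρ ≠ ρ' := by rintro rfl; exact (nodup_cons.mp (nodup_append.mp hnd₀).2.1).1 hρ's
  by_contra hnot
  obtain ⟨u, r, rfl⟩ := append_of_mem (hρ l hl)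
  have hρ'r : ρ' ∉ r := fun h => hnot (pair_sublist_iff.mpr ⟨u, r, rfl, h⟩)
  obtain ⟨⟨-, hc, -⟩, -, hlast⟩ := hl
  obtain ⟨m, hm, hsub⟩ := exists_isSimplePathFrom_subset (p ++ ρ :: r) (hc₀.splice hc)
    (by cases p <;> simpa using hh₀) (by rwa [getLast?_append_cons] at hlast ⊢)
  have hρ'mem := hsub (hρ' m hm)
  simp only [mem_append, mem_cons] at hρ'mem
  tauto

end Paths

section Lift

variable {V : Type*} {E : V → V → Prop}

theorem liftPath_cons (a : V) (l : List V) :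
    liftPath (a :: l) = (a, false) :: (a, true) :: liftPath l :=
  rfl

@[simp]
theorem prnAdj_false {a b : V} {c : Bool} : prnAdj E (a, false) (b, c) ↔ a = b ∧ c = true := by
  simp [prnAdj]

@[simp]
theorem prnAdj_true {a b : V} {c : Bool} : prnAdj E (a, true) (b, c) ↔ E a b ∧ c = false := by
  simp [prnAdj]

theorem exists_liftPath_eq_of_isChain :
    ∀ {L : List (V × Bool)} {a b : V}, L.IsChain (prnAdj E) → L.head? = some (a, false) →
      L.getLast? = some (b, true) →
      ∃ l, L = liftPath l ∧ l.IsChain E ∧ l.head? = some a ∧ l.getLast? = some b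
  | [], _, _, _, ha, _ => by simp at ha
  | [_], _, _, _, ha, hb => by simp_all
  | [(v, c), (w, d)], a, b, hL, ha, hb => by
    simp only [head?_cons, getLast?_cons_cons, getLast?_singleton, Option.some.injEq,
      Prod.mk.injEq] at ha hb
    obtain ⟨⟨rfl, rfl⟩, rfl, rfl⟩ := And.intro ha hb
    obtain rfl : v = w := by simpa using hL
    exact ⟨[v], rfl, by simp, rfl, rfl⟩
  | (v, c) :: (w, d) :: (u, e) :: L, a, b, hL, ha, hb => by
    simp only [head?_cons, Option.some.injEq, Prod.mk.injEq] at ha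
    obtain ⟨rfl, rfl⟩ := ha
    simp only [isChain_cons_cons, prnAdj_false] at hL
    obtain ⟨⟨rfl, rfl⟩, hvu, hL⟩ := hL
    obtain ⟨hE, rfl⟩ := prnAdj_true.mp hvu
    obtain ⟨l, hLl, hl, hu, hb⟩ := exists_liftPath_eq_of_isChain hL rfl (by simpa using hb)
    refine ⟨v :: l, by rw [liftPath_cons, ← hLl], hl.cons (by simpa [hu] using hE), rfl, ?_⟩
    cases l <;> simp_all

theorem nodup_of_nodup_liftPath {l : List V} (h : (liftPath l).Nodup) : l.Nodup :=
  (nodup_flatMap.mp h).2.imp fun hd hab => by subst hab; simp at hd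

theorem exists_liftPath_eq_of_isSimplePathFrom {L : List (V × Bool)} {a b : V}
    (hL : IsSimplePathFrom (prnAdj E) (a, false) (b, true) L) :
    ∃ l, L = liftPath l ∧ IsSimplePathFrom E a b l := by
  obtain ⟨⟨-, hc, hnd⟩, ha, hb⟩ := hL
  obtain ⟨l, rfl, hl, hla, hlb⟩ := exists_liftPath_eq_of_isChain hc ha hb
  exact ⟨l, rfl, ⟨⟨by rintro rfl; simp at hla, hl, nodup_of_nodup_liftPath hnd⟩, hla, hlb⟩⟩

end Lift

theorem stmt_7_general {V : Type*} (E : V → V → Prop) (ι o ρ ρ' : V)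
    (hρ : IsSuperSimpleNode E ι o ρ) (hρ' : IsSuperSimpleNode E ι o ρ')
    (horder : ∃ l, IsSimplePathFrom E ι o l ∧ [ρ, ρ'].Sublist l) :
    ∀ L : List (V × Bool), IsSimplePathFrom (prnAdj E) (ι, false) (o, true) L →
      [(ρ, false), (ρ, true), (ρ', false), (ρ', true)].Sublist L := by
  intro L hL
  obtain ⟨l, rfl, hl⟩ := exists_liftPath_eq_of_isSimplePathFrom hL
  exact (pair_sublist_of_isSuperSimpleNode hρ hρ' horder hl).flatMap
    fun v => [(v, false), (v, true)]

/-- If `ρ`, `ρ'` are super-simple nodes of the GRN and `ρ` appears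
strictly before `ρ'` on some `ιo`-simple path, then on every `ι^R o^P`-simple path of
the PRN the nodes `(ρ,R), (ρ,P), (ρ',R), (ρ',P)` all appear, in that order. -/
theorem stmt_7 {V : Type*} [Fintype V] (E : V → V → Prop) (ι o ρ ρ' : V)
    (hρ : IsSuperSimpleNode E ι o ρ) (hρ' : IsSuperSimpleNode E ι o ρ')
    (horder : ∃ l, IsSimplePathFrom E ι o l ∧ [ρ, ρ'].Sublist l) :
    ∀ L : List (V × Bool), IsSimplePathFrom (prnAdj E) (ι, false) (o, true) L →
      [(ρ, false), (ρ, true), (ρ', false), (ρ', true)].Sublist L :=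
  stmt_7_general E ι o ρ ρ' hρ hρ' horder
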